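/- Let ε ∈ (0, 1/2). Define w(s) ∈ (0,1) by w(s)(2 − w(s)) = s² for s ∈ (0, 1/5] (so w(s) = 1 − √(1 − s²) ≤ s²). Then for any α ∈ (0,1) there is a constant C independent of ε such that ∫₀^{1/5} ε (w(s) + ε) s^{2+α} / ((w(s) − ε)² + s²)^{5/2} ds ≤ C ε^α. -/

import Mathlib

open Real intervalIntegral

/-!
Since `w(s) ≤ s²`, on `0 < s ≤ ε` we have `ε - w(s) ≥ ε/2`, so the denominator is at least
`(ε/2)³ s²` and the integrand is at most `16 ε⁻¹ s^α`, whose integral over `[0, ε]` is `≍ ε^α`.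
On `ε ≤ s` the denominator is at least `s⁵` and `w(s) + ε ≤ 2s`, so the integrand is at most
`2 ε s^(α-2)`, whose integral over `[ε, ∞)` is `2 ε^α / (1 - α)`.
-/

noncomputable def capHeight (s : ℝ) : ℝ := 1 - √(1 - s ^ 2)

noncomputable def boundaryKernel (ε α s : ℝ) : ℝ :=
  ε * (capHeight s + ε) * s ^ ((2 : ℝ) + α) / ((capHeight s - ε) ^ 2 + s ^ 2) ^ ((5 : ℝ) / 2)

lemma capHeight_nonneg (s : ℝ) : 0 ≤ capHeight s := by
  have : √(1 - s ^ 2) ≤ 1 := sqrt_le_one.mpr (by nlinarith)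
  unfold capHeight
  linarith

lemma capHeight_le_sq {s : ℝ} (hs : s ^ 2 ≤ 1) : capHeight s ≤ s ^ 2 := by
  have h0 : 0 ≤ 1 - s ^ 2 := by linarith
  have : 1 - s ^ 2 ≤ √(1 - s ^ 2) := (le_sqrt h0 h0).2 (by nlinarith)
  unfold capHeight
  linarith

lemma continuous_capHeight : Continuous capHeight := by
  unfold capHeight
  fun_prop

lemma capHeight_sub_sq_add_sq_pos {ε : ℝ} (hε : ε ≠ 0) (s : ℝ) :
    0 < (capHeight s - ε) ^ 2 + s ^ 2 := by
  rcases eq_or_ne s 0 with rfl | hs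
  · simpa [capHeight] using sq_pos_of_ne_zero hε
  · positivity

lemma continuous_boundaryKernel {ε α : ℝ} (hε : ε ≠ 0) (hα : -2 ≤ α) :
    Continuous (boundaryKernel ε α) := by
  refine Continuous.div ?_ ?_ fun s ↦ (rpow_pos_of_pos (capHeight_sub_sq_add_sq_pos hε s) _).ne'
  · exact (continuous_const.mul (continuous_capHeight.add continuous_const)).mul
      (continuous_id.rpow_const fun _ ↦ Or.inr (by linarith))
  · exact (((continuous_capHeight.sub continuous_const).pow 2).add (continuous_pow 2)).rpow_const
      fun _ ↦ Or.inr (by norm_num)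

lemma boundaryKernel_nonneg {ε α s : ℝ} (hε : 0 ≤ ε) (hs : 0 ≤ s) : 0 ≤ boundaryKernel ε α s := by
  have := capHeight_nonneg s
  unfold boundaryKernel
  positivity

lemma pow_three_mul_sq_le_rpow_five_div_two {D x y : ℝ} (hx : 0 ≤ x) (hxD : x ^ 2 ≤ D)
    (hyD : y ^ 2 ≤ D) : x ^ 3 * y ^ 2 ≤ D ^ ((5 : ℝ) / 2) := by
  have hD : 0 ≤ D := (sq_nonneg x).trans hxD
  have hx3 : x ^ 3 = (x ^ 2) ^ ((3 : ℝ) / 2) := by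
    rw [← rpow_natCast x 2, ← rpow_mul hx]
    norm_num
  calc x ^ 3 * y ^ 2 ≤ D ^ ((3 : ℝ) / 2) * D := by
        rw [hx3]
        gcongr
    _ = D ^ ((5 : ℝ) / 2) := by
        rw [← rpow_add_one' hD (by norm_num)]
        norm_num

lemma boundaryKernel_le_of_le {ε α s : ℝ} (hε : ε ≤ 1 / 2) (hs : 0 < s) (hsε : s ≤ ε) :
    boundaryKernel ε α s ≤ 16 * ε⁻¹ * s ^ α := by
  have hε0 : 0 < ε := hs.trans_le hsε
  have hw0 := capHeight_nonneg s
  have hw : capHeight s ≤ ε / 2 := (capHeight_le_sq (by nlinarith)).trans (by nlinarith)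
  have hD : (ε / 2) ^ 3 * s ^ 2 ≤ ((capHeight s - ε) ^ 2 + s ^ 2) ^ ((5 : ℝ) / 2) :=
    pow_three_mul_sq_le_rpow_five_div_two (by positivity) (by nlinarith) (by nlinarith)
  have hsplit : s ^ ((2 : ℝ) + α) = s ^ 2 * s ^ α := by rw [rpow_add hs, rpow_two]
  calc boundaryKernel ε α s ≤ ε * (2 * ε) * (s ^ 2 * s ^ α) / ((ε / 2) ^ 3 * s ^ 2) := by
        unfold boundaryKernel
        rw [hsplit]
        gcongr
        linarith
    _ = 16 * ε⁻¹ * s ^ α := by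
        field_simp
        ring

lemma boundaryKernel_le_of_ge {ε α s : ℝ} (hε : 0 < ε) (hεs : ε ≤ s) (hs : s ≤ 1) :
    boundaryKernel ε α s ≤ 2 * ε * s ^ (α - 2) := by
  have hs0 : 0 < s := hε.trans_le hεs
  have hw0 := capHeight_nonneg s
  have hw : capHeight s ≤ s := (capHeight_le_sq (by nlinarith)).trans (by nlinarith)
  have hD : s ^ 3 * s ^ 2 ≤ ((capHeight s - ε) ^ 2 + s ^ 2) ^ ((5 : ℝ) / 2) :=
    pow_three_mul_sq_le_rpow_five_div_two hs0.le (by nlinarith [sq_nonneg (capHeight s - ε)])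
      (by nlinarith [sq_nonneg (capHeight s - ε)])
  have hsplit : s ^ ((2 : ℝ) + α) = s ^ 4 * s ^ (α - 2) := by
    rw [show (2 : ℝ) + α = (4 : ℕ) + (α - 2) by push_cast; ring, rpow_add hs0, rpow_natCast]
  calc boundaryKernel ε α s ≤ ε * (2 * s) * (s ^ 4 * s ^ (α - 2)) / (s ^ 3 * s ^ 2) := by
        unfold boundaryKernel
        rw [hsplit]
        gcongr
        linarith
    _ = 2 * ε * s ^ (α - 2) := by
        field_simp

lemma integral_boundaryKernel_le_of_le {ε α : ℝ} (hα : -1 < α) (hε : 0 < ε) (hε2 : ε ≤ 1 / 2) :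
    ∫ s in (0 : ℝ)..ε, boundaryKernel ε α s ≤ 16 / (α + 1) * ε ^ α :=
  calc ∫ s in (0 : ℝ)..ε, boundaryKernel ε α s ≤ ∫ s in (0 : ℝ)..ε, 16 * ε⁻¹ * s ^ α :=
        integral_mono_on_of_le_Ioo hε.le
          ((continuous_boundaryKernel hε.ne' (by linarith)).intervalIntegrable _ _)
          ((intervalIntegrable_rpow' hα).const_mul _)
          fun s hs ↦ boundaryKernel_le_of_le hε2 hs.1 hs.2.le
    _ = 16 / (α + 1) * ε ^ α := by
        rw [integral_const_mul, integral_rpow (Or.inl hα), zero_rpow (by linarith),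
          sub_zero, rpow_add_one hε.ne']
        field_simp

lemma integral_boundaryKernel_le_of_ge {ε α b : ℝ} (hα : -2 ≤ α) (hα1 : α < 1) (hε : 0 < ε)
    (hεb : ε ≤ b) (hb : b ≤ 1) :
    ∫ s in ε..b, boundaryKernel ε α s ≤ 2 / (1 - α) * ε ^ α := by
  have hα1' : 0 < 1 - α := by linarith
  have hα1ne : α - 1 ≠ 0 := by linarith
  have hb0 : 0 < b := hε.trans_le hεb
  calc ∫ s in ε..b, boundaryKernel ε α s ≤ ∫ s in ε..b, 2 * ε * s ^ (α - 2) :=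
        integral_mono_on hεb ((continuous_boundaryKernel hε.ne' hα).intervalIntegrable _ _)
          ((intervalIntegrable_rpow (Or.inr (Set.notMem_uIcc_of_lt hε hb0))).const_mul _)
          fun s hs ↦ boundaryKernel_le_of_ge hε hs.1 (hs.2.trans hb)
    _ = 2 / (1 - α) * (ε ^ α - ε * b ^ (α - 1)) := by
        rw [integral_const_mul, integral_rpow (Or.inr ⟨by linarith,
          Set.notMem_uIcc_of_lt hε hb0⟩), show α - 2 + 1 = α - 1 by ring,
          rpow_sub_one hε.ne']
        field_simp
        ring
    _ ≤ 2 / (1 - α) * ε ^ α := by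
        gcongr
        exact sub_le_self _ (by positivity)

/-- Boundary-layer integral estimate: with `w(s) = 1 − √(1 − s²)` (so `w(s)(2−w(s)) = s²`
and `w(s) ≤ s²`), for any `α ∈ (0,1)` there is a constant `C` independent of `ε ∈ (0,1/2)`
such that `∫₀^{1/5} ε(w(s)+ε) s^{2+α} / ((w(s)−ε)² + s²)^{5/2} ds ≤ C ε^α`. -/
theorem stmt_15 (α : ℝ) (hα : α ∈ Set.Ioo (0 : ℝ) 1) :
    ∃ C : ℝ, 0 < C ∧
      ∀ ε : ℝ, ε ∈ Set.Ioo (0 : ℝ) (1 / 2) →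
        (∫ s in (0:ℝ)..(1 / 5),
          ε * ((1 - Real.sqrt (1 - s ^ 2)) + ε) * s ^ ((2 : ℝ) + α) /
            (((1 - Real.sqrt (1 - s ^ 2)) - ε) ^ 2 + s ^ 2) ^ ((5 : ℝ) / 2))
        ≤ C * ε ^ α := by
  obtain ⟨hα0, hα1⟩ := hα
  have hα1' : 0 < 1 - α := by linarith
  refine ⟨16 / (α + 1) + 2 / (1 - α), by positivity, ?_⟩
  rintro ε ⟨hε0, hε2⟩
  change ∫ s in (0 : ℝ)..(1 / 5), boundaryKernel ε α s ≤ _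
  have hinner := integral_boundaryKernel_le_of_le (α := α) (by linarith) hε0 hε2.le
  have hcont := continuous_boundaryKernel (α := α) hε0.ne' (by linarith)
  rcases le_or_gt ε (1 / 5) with hε5 | hε5
  · rw [← integral_add_adjacent_intervals (hcont.intervalIntegrable 0 ε)
      (hcont.intervalIntegrable ε _), add_mul]
    exact add_le_add hinner
      (integral_boundaryKernel_le_of_ge (by linarith) hα1 hε0 hε5 (by norm_num))
  · calc ∫ s in (0 : ℝ)..(1 / 5), boundaryKernel ε α s
          ≤ ∫ s in (0 : ℝ)..ε, boundaryKernel ε α s :=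
          integral_mono_interval le_rfl (by norm_num) hε5.le
            ((MeasureTheory.ae_restrict_iff' measurableSet_Ioc).2 (Filter.Eventually.of_forall fun s hs ↦
              boundaryKernel_nonneg hε0.le hs.1.le))
            (hcont.intervalIntegrable _ _)
      _ ≤ (16 / (α + 1) + 2 / (1 - α)) * ε ^ α := by
          have : 0 ≤ 2 / (1 - α) * ε ^ α := by positivity
          linarith
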